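/- arXiv:2101.04403 — 6 statements merged into one kernel-verified Lean document; each statement's English description precedes it below -/
import Mathlib

section
/- A set of paths P is k-identifiable if and only if every node u is k-identifiable with respect to P (i.e., for all node sets U, W of size at most k with U ∩ {u} ≠ W ∩ {u}, we have P(U) ≠ P(W)). -/
def pathsOf {n m : ℕ} (P : Fin n → Finset (Fin m)) (U : Finset (Fin n)) : Finset (Fin m) :=
  U.biUnion P

def Identifiable {n m : ℕ} (P : Fin n → Finset (Fin m)) (k : ℕ) : Prop :=
  ∀ U W : Finset (Fin n), U.card ≤ k → W.card ≤ k → U ≠ W → pathsOf P U ≠ pathsOf P W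

/-- A node `u` is `k`-identifiable with respect to `P`. -/
def NodeIdentifiable {n m : ℕ} (P : Fin n → Finset (Fin m)) (k : ℕ) (u : Fin n) : Prop :=
  ∀ U W : Finset (Fin n), U.card ≤ k → W.card ≤ k → U ∩ {u} ≠ W ∩ {u} →
    pathsOf P U ≠ pathsOf P W

theorem Finset.eq_iff_forall_inter_singleton {α : Type*} [DecidableEq α] {s t : Finset α} :
    s = t ↔ ∀ a, s ∩ {a} = t ∩ {a} :=
  ⟨fun h _ => h ▸ rfl, fun h => ext fun a => by simpa using congrArg (a ∈ ·) (h a)⟩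

theorem Finset.exists_inter_singleton_ne_of_ne {α : Type*} [DecidableEq α] {s t : Finset α}
    (h : s ≠ t) : ∃ a, s ∩ {a} ≠ t ∩ {a} :=
  not_forall.mp (mt eq_iff_forall_inter_singleton.mpr h)

theorem identifiable_iff_forall_node {n m : ℕ} (P : Fin n → Finset (Fin m)) (k : ℕ) :
    Identifiable P k ↔ ∀ u : Fin n, NodeIdentifiable P k u := by
  constructor
  · intro h u U W hU hW hne
    exact h U W hU hW fun hUW => hne (hUW ▸ rfl)
  · intro h U W hU hW hne
    obtain ⟨u, hu⟩ := Finset.exists_inter_singleton_ne_of_ne hne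
    exact h u U W hU hW hu
end

section
/- Let P be a set of m paths over n nodes. Then the number of 1-identifiable nodes satisfies |ID₁(P)| ≤ min(n, 2^m − 1). -/
theorem Finset.ncard_setOf_nonempty (α : Type*) [Fintype α] :
    {S : Finset α | S.Nonempty}.ncard = 2 ^ Fintype.card α - 1 := by
  have : {S : Finset α | S.Nonempty} = Set.univ \ {∅} := by
    ext S; simp [Finset.nonempty_iff_ne_empty]
  rw [this, Set.ncard_sdiff_singleton_of_mem (Set.mem_univ _), Set.ncard_univ,
    Nat.card_eq_fintype_card, Fintype.card_finset]

section pathsOf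

variable {n m : ℕ} (P : Fin n → Finset (Fin m))

@[simp]
theorem pathsOf_empty : pathsOf P ∅ = ∅ :=
  Finset.biUnion_empty

@[simp]
theorem pathsOf_singleton (u : Fin n) : pathsOf P {u} = P u :=
  Finset.singleton_biUnion

end pathsOf

namespace NodeIdentifiable

variable {n m k : ℕ} {P : Fin n → Finset (Fin m)} {u : Fin n}

theorem nonempty (h : NodeIdentifiable P k u) (hk : 1 ≤ k) : (P u).Nonempty := by
  rw [Finset.nonempty_iff_ne_empty, ← pathsOf_singleton P, ← pathsOf_empty P]
  exact h {u} ∅ (by simpa) (by simp) (by simp)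

theorem eq_of_paths_eq (h : NodeIdentifiable P k u) (hk : 1 ≤ k) {w : Fin n}
    (hw : P w = P u) : w = u := by
  by_contra hwu
  refine h {w} {u} (by simpa) (by simpa) ?_ (by simpa)
  simp [Finset.singleton_inter_of_notMem (Finset.notMem_singleton.mpr hwu)]

end NodeIdentifiable

theorem injOn_setOf_nodeIdentifiable {n m k : ℕ} (P : Fin n → Finset (Fin m)) (hk : 1 ≤ k) :
    Set.InjOn P {u | NodeIdentifiable P k u} :=
  fun _ hu _ _ huw => (hu.eq_of_paths_eq hk huw.symm).symm

theorem card_ID_one_le_general {n m : ℕ} (P : Fin n → Finset (Fin m)) :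
    {u : Fin n | NodeIdentifiable P 1 u}.ncard ≤ min n (2 ^ m - 1) := by
  refine le_min ((Set.ncard_le_card _).trans (Nat.card_fin n).le) ?_
  calc {u : Fin n | NodeIdentifiable P 1 u}.ncard
      ≤ {S : Finset (Fin m) | S.Nonempty}.ncard :=
        Set.ncard_le_ncard_of_injOn P (fun _ hu => hu.nonempty le_rfl)
          (injOn_setOf_nodeIdentifiable P le_rfl)
    _ = 2 ^ m - 1 := by rw [Finset.ncard_setOf_nonempty, Fintype.card_fin]

theorem card_ID_one_le {n m : ℕ} (P : Fin n → Finset (Fin m))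
    (hne : ∀ u, (P u).Nonempty) :
    {u : Fin n | NodeIdentifiable P 1 u}.ncard ≤ min n (2 ^ m - 1) :=
  card_ID_one_le_general P
end

section
/- If a node u is k-separable in P, then u is k-identifiable in P. -/
/-- A node `u` is `k`-separable in `P`. -/
def Separable {n m : ℕ} (P : Fin n → Finset (Fin m)) (k : ℕ) (u : Fin n) : Prop :=
  ∀ U : Finset (Fin n), U.card ≤ k → u ∉ U → ∃ p ∈ P u, p ∉ pathsOf P U

lemma subset_pathsOf_of_mem {n m : ℕ} (P : Fin n → Finset (Fin m)) {U : Finset (Fin n)}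
    {u : Fin n} (hu : u ∈ U) : P u ⊆ pathsOf P U :=
  Finset.subset_biUnion_of_mem P hu

lemma Finset.mem_xor_of_inter_singleton_ne {α : Type*} [DecidableEq α] {U W : Finset α}
    {u : α} (h : U ∩ {u} ≠ W ∩ {u}) : Xor (u ∈ U) (u ∈ W) := by
  by_contra hsame
  rw [xor_iff_not_iff, not_not] at hsame
  exact h (by ext x; simp only [Finset.mem_inter, Finset.mem_singleton]; grind)

lemma Separable.pathsOf_ne {n m k : ℕ} {P : Fin n → Finset (Fin m)} {u : Fin n}
    (h : Separable P k u) {U W : Finset (Fin n)} (huU : u ∈ U) (hW : W.card ≤ k)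
    (huW : u ∉ W) : pathsOf P U ≠ pathsOf P W := by
  intro hUW
  obtain ⟨p, hpu, hpW⟩ := h W hW huW
  exact hpW (hUW ▸ subset_pathsOf_of_mem P huU hpu)

theorem identifiable_of_separable {n m k : ℕ} (P : Fin n → Finset (Fin m)) (u : Fin n)
    (h : Separable P k u) : NodeIdentifiable P k u := by
  intro U W hU hW hne
  rcases Finset.mem_xor_of_inter_singleton_ne hne with ⟨huU, huW⟩ | ⟨huW, huU⟩
  · exact h.pathsOf_ne huU hW huW
  · exact (h.pathsOf_ne huW hU huU).symm
end

section
/- Define V₁ = [n] and V_k = [n] \ ⋃_{j<k} E_{V_j,j}, where E_{V,k} is the set of nodes u ∈ V that are k-equal modulo 𝒫 to some W ∈ 𝕎(u) of size ≤ k, and set τ_k = |E_{V_k,k}|. Then the sets E_{V_1,1}, E_{V_2,2}, …, E_{V_k,k} are pairwise disjoint, each E_{V_j,j} ⊆ complement of DIS_j(P), and |DIS_k(P)| ≤ n − ∑_{j=1}^{k} τ_j. -/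
/-- `u` is `k`-equal to `W` modulo `Q`. -/
def KEqualMod {n : ℕ} {α : Type*} (P : Fin n → Set α) (Q : Fin n → Fin n → Set α)
    (u : Fin n) (W : Finset (Fin n)) : Prop :=
  (∃ w ∈ W, ∃ w' ∈ W, P u \ Q u w ⊆ P w') ∧ ∀ w ∈ W, P w \ Q u w ⊆ P u

/-- `E_{V,k}`: nodes of `V` that are `k`-equal modulo `Q` to some eligible `W ∈ 𝕎(u)`. -/
def ESet {n : ℕ} {α : Type*} (P : Fin n → Set α) (Q : Fin n → Fin n → Set α)
    (Wfam : Fin n → Set (Finset (Fin n))) (V : Set (Fin n)) (k : ℕ) : Set (Fin n) :=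
  {u | u ∈ V ∧ ∃ W ∈ Wfam u, W.Nonempty ∧ u ∉ W ∧ W.card ≤ k ∧ KEqualMod P Q u W}

/-- The set of `k`-distinguishable nodes. -/
def DisSet {n : ℕ} {α : Type*} (P : Fin n → Set α) (k : ℕ) : Set (Fin n) :=
  {u | ∀ U : Finset (Fin n), U.card ≤ k → u ∉ U → P u ≠ ⋃ w ∈ U, P w}

/-! The layers `E_{V_j,j}` are disjoint because `V_j` removes all earlier layers, and each of them
lies outside `DIS_j(P) ⊇ DIS_k(P)` because `k`-equality modulo `𝒫` forces `P(u) = P(W)`. Hence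
`DIS_k(P)` and the `k` layers are disjoint subsets of `[n]`, which gives the counting bound. -/

theorem Set.ncard_add_sum_ncard_le_card {α ι : Type*} [Finite α] {t : Set α} {I : Finset ι}
    {s : ι → Set α} (hs : (I : Set ι).PairwiseDisjoint s) (hst : ∀ i ∈ I, s i ⊆ tᶜ) :
    t.ncard + ∑ i ∈ I, (s i).ncard ≤ Nat.card α := by
  rw [← finsum_mem_coe_finset,
    ← I.finite_toSet.ncard_biUnion (fun i _ => (s i).toFinite) hs, ← ncard_add_ncard_compl t]
  exact Nat.add_le_add_left (ncard_le_ncard (iUnion₂_subset hst)) _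

section

variable {n : ℕ} {α : Type*} {P : Fin n → Set α} {Q : Fin n → Fin n → Set α}

theorem KEqualMod.eq_biUnion (hQ : ∀ u w, Q u w ⊆ P u ∩ P w) {u : Fin n} {W : Finset (Fin n)}
    (h : KEqualMod P Q u W) : P u = ⋃ w ∈ W, P w := by
  obtain ⟨⟨w, hw, w', hw', hu⟩, hW⟩ := h
  apply Set.Subset.antisymm
  · intro x hx
    by_cases hxq : x ∈ Q u w
    · exact Set.mem_biUnion hw (hQ u w hxq).2
    · exact Set.mem_biUnion hw' (hu ⟨hx, hxq⟩)
  · refine Set.iUnion₂_subset fun v hv x hx => ?_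
    by_cases hxq : x ∈ Q u v
    · exact (hQ u v hxq).1
    · exact hW v hv ⟨hx, hxq⟩

theorem DisSet_antitone (P : Fin n → Set α) : Antitone (DisSet P) :=
  fun _ _ hjk _ hu U hU => hu U (hU.trans hjk)

theorem ESet_subset_compl_DisSet (hQ : ∀ u w, Q u w ⊆ P u ∩ P w)
    (Wfam : Fin n → Set (Finset (Fin n))) (V : Set (Fin n)) (k : ℕ) :
    ESet P Q Wfam V k ⊆ (DisSet P k)ᶜ := by
  rintro u ⟨-, W, -, -, huW, hWk, hEq⟩ hdis
  exact hdis W hWk huW (hEq.eq_biUnion hQ)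

theorem pairwiseDisjoint_ESet_layers {Wfam : Fin n → Set (Finset (Fin n))}
    {Vs : ℕ → Set (Fin n)}
    (hVs : ∀ j : ℕ, Vs j = Set.univ \ ⋃ i ∈ Finset.Ico 1 j, ESet P Q Wfam (Vs i) i) :
    (Set.Ici 1).PairwiseDisjoint fun j => ESet P Q Wfam (Vs j) j := by
  have layer_lt : ∀ i j, 1 ≤ i → i < j →
      Disjoint (ESet P Q Wfam (Vs i) i) (ESet P Q Wfam (Vs j) j) := by
    refine fun i j hi hij => Set.disjoint_left.2 fun u hui huj => ?_
    have huVj : u ∈ Vs j := huj.1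
    rw [hVs j] at huVj
    exact huVj.2 (Set.mem_biUnion (Finset.mem_Ico.2 ⟨hi, hij⟩) hui)
  intro i hi j hj hij
  rcases hij.lt_or_gt with h | h
  · exact layer_lt i j hi h
  · exact (layer_lt j i hj h).symm

end

theorem dis_upper_bound_tau {n : ℕ} {α : Type*} (P : Fin n → Set α)
    (Q : Fin n → Fin n → Set α) (hQ : ∀ u w, Q u w ⊆ P u ∩ P w)
    (Wfam : Fin n → Set (Finset (Fin n))) (k : ℕ)
    (Vs : ℕ → Set (Fin n))
    (hVs : ∀ j : ℕ, Vs j = Set.univ \ ⋃ i ∈ Finset.Ico 1 j, ESet P Q Wfam (Vs i) i) :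
    (Set.Pairwise ↑(Finset.Icc 1 k)
        fun i j => Disjoint (ESet P Q Wfam (Vs i) i) (ESet P Q Wfam (Vs j) j)) ∧
    (∀ j ∈ Finset.Icc 1 k, ESet P Q Wfam (Vs j) j ⊆ (DisSet P j)ᶜ) ∧
    (DisSet P k).ncard ≤ n - ∑ j ∈ Finset.Icc 1 k, (ESet P Q Wfam (Vs j) j).ncard := by
  have hdisj : (↑(Finset.Icc 1 k) : Set ℕ).PairwiseDisjoint
      fun j => ESet P Q Wfam (Vs j) j :=
    (pairwiseDisjoint_ESet_layers hVs).subset fun j hj => (Finset.mem_Icc.1 hj).1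
  have hlayers : ∀ j ∈ Finset.Icc 1 k, ESet P Q Wfam (Vs j) j ⊆ (DisSet P k)ᶜ :=
    fun j hj => (ESet_subset_compl_DisSet hQ Wfam (Vs j) j).trans
      (Set.compl_subset_compl.2 (DisSet_antitone P (Finset.mem_Icc.1 hj).2))
  have hcount := Set.ncard_add_sum_ncard_le_card hdisj hlayers
  rw [Nat.card_fin] at hcount
  exact ⟨hdisj, fun j _ => ESet_subset_compl_DisSet hQ Wfam (Vs j) j, by omega⟩
end

section
/- Given a hypergraph H = (V, E) (an instance of minimum hitting set), construct the path instance P over node set V ∪ {u} (u a fresh node) with path set E, where each node v ∈ V touches exactly the edges containing it and u touches every edge. Then a set W ⊆ V satisfies P(u) ⊆ P(W) if and only if W is a hitting set (transversal) of H. Consequently, u fails to be |W|-separable in P exactly when W is a hitting set of H. -/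
theorem univ_subset_biUnion_mem_iff {V : Type*} [DecidableEq V] (E : Finset (Finset V))
    (W : Finset V) :
    (Set.univ : Set {e // e ∈ E}) ⊆ ⋃ w ∈ W, {e | w ∈ e.val} ↔ ∀ e ∈ E, (W ∩ e).Nonempty := by
  simp only [Set.univ_subset_iff, Set.eq_univ_iff_forall, Set.mem_iUnion₂, Set.mem_ofPred_eq,
    Finset.Nonempty, Finset.mem_inter, Subtype.forall, exists_prop]

theorem not_forall_exists_not_mem_iff_exists_subset {ι α : Type*} (p : ι → Prop) (s : Set α)
    (t : ι → Set α) : (¬ ∀ i, p i → ∃ x ∈ s, x ∉ t i) ↔ ∃ i, p i ∧ s ⊆ t i := by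
  push Not
  rfl

theorem mhs_reduction_general {V : Type*} [DecidableEq V] (E : Finset (Finset V))
    (P : Option V → Set {e // e ∈ E})
    (hPv : ∀ v : V, P (some v) = {e : {e // e ∈ E} | v ∈ e.val})
    (hPu : P none = Set.univ) :
    (∀ W : Finset V, (P none ⊆ ⋃ w ∈ W, P (some w)) ↔ ∀ e ∈ E, (W ∩ e).Nonempty) ∧
    (∀ k : ℕ,
      (¬ ∀ W : Finset V, W.card ≤ k → ∃ p ∈ P none, p ∉ ⋃ w ∈ W, P (some w)) ↔
        ∃ W : Finset V, W.card ≤ k ∧ ∀ e ∈ E, (W ∩ e).Nonempty) := by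
  simp only [hPu, hPv]
  refine ⟨univ_subset_biUnion_mem_iff E, fun k => ?_⟩
  simp only [not_forall_exists_not_mem_iff_exists_subset, univ_subset_biUnion_mem_iff]

theorem mhs_reduction {V : Type*} [DecidableEq V] (E : Finset (Finset V))
    (hE : ∀ e ∈ E, e.Nonempty)
    (P : Option V → Set {e // e ∈ E})
    (hPv : ∀ v : V, P (some v) = {e : {e // e ∈ E} | v ∈ e.val})
    (hPu : P none = Set.univ) :
    (∀ W : Finset V, (P none ⊆ ⋃ w ∈ W, P (some w)) ↔ ∀ e ∈ E, (W ∩ e).Nonempty) ∧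
    (∀ k : ℕ,
      (¬ ∀ W : Finset V, W.card ≤ k → ∃ p ∈ P none, p ∉ ⋃ w ∈ W, P (some w)) ↔
        ∃ W : Finset V, W.card ≤ k ∧ ∀ e ∈ E, (W ∩ e).Nonempty) :=
  mhs_reduction_general E P hPv hPu
end

section
/- If every r-regular k-union-free hypergraph on vertex set [m] has at most f(r) edges, and P is a k-identifiable set of m paths over n nodes, then n ≤ ∑_{r=1}^{m} f(r). -/
def UnionFree {m : ℕ} (k : ℕ) (F : Finset (Finset (Fin m))) : Prop :=
  ∀ A B : Finset (Finset (Fin m)), A ⊆ F → B ⊆ F → A.Nonempty → B.Nonempty →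
    A.card ≤ k → B.card ≤ k → A ≠ B → A.sup id ≠ B.sup id

/-!
The distinct sets `P u` form a `k`-union-free family: a subfamily of it is the image of a node
set of the same size, and its union is the set of paths through those nodes, so identifiability
separates the unions. Sorting the `n` sets by their size `r ∈ [1, m]` splits this family into
`r`-regular `k`-union-free subfamilies, each of size at most `f r`.
-/

open Finset

lemma pathsOf_eq_sup_image {n m : ℕ} (P : Fin n → Finset (Fin m)) (U : Finset (Fin n)) :
    pathsOf P U = (U.image P).sup id := by
  rw [pathsOf, ← sup_eq_biUnion, sup_image, Function.id_comp]

lemma UnionFree.mono {m k : ℕ} {F G : Finset (Finset (Fin m))} (hF : UnionFree k F)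
    (hGF : G ⊆ F) : UnionFree k G :=
  fun A B hA hB => hF A B (hA.trans hGF) (hB.trans hGF)

lemma Identifiable.unionFree_image_univ {n m k : ℕ} {P : Fin n → Finset (Fin m)}
    (hid : Identifiable P k) (hinj : Function.Injective P) : UnionFree k (univ.image P) := by
  intro A B hA hB _ _ hAk hBk hAB
  obtain ⟨U, -, rfl⟩ := subset_image_iff.mp hA
  obtain ⟨W, -, rfl⟩ := subset_image_iff.mp hB
  rw [card_image_of_injective _ hinj] at hAk hBk
  rw [← pathsOf_eq_sup_image, ← pathsOf_eq_sup_image]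
  exact hid U W hAk hBk (fun hUW => hAB (hUW ▸ rfl))

lemma card_eq_sum_card_filter_card_eq {m : ℕ} (F : Finset (Finset (Fin m)))
    (hne : ∀ A ∈ F, A.Nonempty) : #F = ∑ r ∈ Icc 1 m, #{A ∈ F | #A = r} := by
  refine card_eq_sum_card_fiberwise fun A hA => mem_Icc.mpr ⟨?_, ?_⟩
  · exact card_pos.mpr (hne A hA)
  · simpa using card_le_univ A

theorem nodes_le_sum_unionFree_bound {n m k : ℕ} (f : ℕ → ℕ)
    (hf : ∀ r : ℕ, ∀ F : Finset (Finset (Fin m)),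
      (∀ A ∈ F, A.card = r) → UnionFree k F → F.card ≤ f r)
    (P : Fin n → Finset (Fin m)) (hinj : Function.Injective P)
    (hne : ∀ u, (P u).Nonempty) (hid : Identifiable P k) :
    n ≤ ∑ r ∈ Finset.Icc 1 m, f r := by
  set F := univ.image P
  have hcard : #F = n := by rw [card_image_of_injective _ hinj, card_univ, Fintype.card_fin]
  have hnonempty : ∀ A ∈ F, A.Nonempty := by
    simp only [F, mem_image, mem_univ, true_and, forall_exists_index, forall_apply_eq_imp_iff]
    exact hne
  have hF : UnionFree k F := hid.unionFree_image_univ hinj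
  rw [← hcard, card_eq_sum_card_filter_card_eq F hnonempty]
  exact sum_le_sum fun r _ =>
    hf r _ (fun A hA => (mem_filter.mp hA).2) (hF.mono (filter_subset _ _))
end
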